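/- arXiv:2201.11832 — 2 statements merged into one kernel-verified Lean document; each statement's English description precedes it below -/
import Mathlib

section
/- (Observation 1.) Fix a party A ∈ Δ, a subset 𝒳 ⊆ Δ \ {A}, and a strict partial order ξ₀ on {A} ∪ 𝒳. For an SPO κ on Γ, let Q(κ) denote the conjunction of: (i) for all X ∈ 𝒳, not A 𝒞_κ X; and (ii) the restriction of 𝒞_κ to {A} ∪ 𝒳 equals ξ₀. Then for any two SPOs κ and κ' on Γ that both satisfy the closed-laboratory structural conditions for every party, if the causal past of I_A and the causal elsewhere of I_A are the same sets for κ and κ', and κ and κ' agree as relations on 𝒫_{I_A} ∪ ℰ_{I_A}, then Q(κ) holds if and only if Q(κ') holds. -/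
/-!
The future of `I_A` is the complement of `{I_A} ∪ 𝒫_{I_A} ∪ ℰ_{I_A}`, so it is the same for
`κ` and `κ'`, and the two orders agree on all pairs of variables outside it. A link
`W_O ≺ V_I` of a coarse-grained chain therefore transfers from one order to the other unless
`V_I` lies in the future of `I_A`, in which case `A_O ≺ V_I` by the closed-laboratory
conditions. Hence a chain `a 𝒞 b` for one order yields `a 𝒞 b` or `A 𝒞 b` for the other; and
`Q` forbids `A 𝒞 b` for every `b ∈ {A} ∪ 𝒳`, so `𝒞_κ` and `𝒞_κ'` agree on the pairs that `Q`
constrains.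
-/

/-- The variables associated to the parties: for a party `X`, `(X,0)` is `X_I`, `(X,1)` is
`X_O`, `(X,2)` is the setting variable `I_X` and `(X,3)` is the outcome variable `O_X`. -/
abbrev PVar (Δ : Type*) := Δ × Fin 4

def XIv {Δ : Type*} (X : Δ) : PVar Δ := (X, 0)
def XOv {Δ : Type*} (X : Δ) : PVar Δ := (X, 1)
def IVv {Δ : Type*} (X : Δ) : PVar Δ := (X, 2)
def OVv {Δ : Type*} (X : Δ) : PVar Δ := (X, 3)

/-- The closed-laboratory structural conditions on a strict partial order on `Γ`. -/
def ClosedLabStruct {Δ : Type*} (κ : PVar Δ → PVar Δ → Prop) : Prop :=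
  ∀ (X : Δ) (Y : PVar Δ),
    (κ (IVv X) Y ↔ (Y = OVv X ∨ Y = XOv X ∨ κ (XOv X) Y)) ∧
    (κ Y (OVv X) ↔ (Y = IVv X ∨ Y = XIv X ∨ κ Y (XIv X)))

/-- The coarse-grained relation `𝒞_κ` on the parties: `X 𝒞_κ Y` iff there is a chain
`X_O ≺ Λ^{(1)}_I`, `Λ^{(j)}_O ≺ Λ^{(j+1)}_I`, …, `Λ^{(M)}_O ≺ Y_I` (with `M ≥ 0`). -/
def coarse {Δ : Type*} (κ : PVar Δ → PVar Δ → Prop) : Δ → Δ → Prop :=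
  Relation.TransGen (fun W V => κ (XOv W) (XIv V))

/-- `Y` belongs to the causal past or causal elsewhere of `I_A` (w.r.t. `κ`). -/
def inPE {Δ : Type*} (κ : PVar Δ → PVar Δ → Prop) (A : Δ) (Y : PVar Δ) : Prop :=
  κ Y (IVv A) ∨ (Y ≠ IVv A ∧ ¬ κ Y (IVv A) ∧ ¬ κ (IVv A) Y)

/-- The condition `Q(κ)`: (i) no element of `𝒳` lies in the coarse-grained causal future
of `A`, and (ii) the restriction of `𝒞_κ` to `{A} ∪ 𝒳` equals `ξ₀`. -/
def Qcond {Δ : Type*} (κ : PVar Δ → PVar Δ → Prop) (A : Δ) (𝒳 : Set Δ)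
    (ξ₀ : Δ → Δ → Prop) : Prop :=
  (∀ W ∈ 𝒳, ¬ coarse κ A W) ∧
  (∀ a ∈ insert A 𝒳, ∀ b ∈ insert A 𝒳, (coarse κ a b ↔ ξ₀ a b))

theorem Relation.TransGen.or_of_imp_or {α : Type*} {r s : α → α → Prop} {c a b : α}
    (hsr : ∀ x y, s x y → r x y ∨ r c y) (h : Relation.TransGen s a b) :
    Relation.TransGen r a b ∨ Relation.TransGen r c b := by
  induction h with
  | single hab => exact (hsr _ _ hab).imp .single .single
  | tail _ hyz ih =>
    rcases hsr _ _ hyz with hyz | hcz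
    · exact ih.imp (·.tail hyz) (·.tail hyz)
    · exact .inr (.single hcz)

theorem future_iff_of_past_iff_of_elsewhere_iff {α : Type*} {r r' : α → α → Prop} {x : α}
    (hrIrrefl : ∀ a, ¬ r a a) (hrTrans : ∀ a b c, r a b → r b c → r a c)
    (hr'Irrefl : ∀ a, ¬ r' a a) (hr'Trans : ∀ a b c, r' a b → r' b c → r' a c)
    (hPast : ∀ y, r y x ↔ r' y x)
    (hElse : ∀ y, (y ≠ x ∧ ¬ r y x ∧ ¬ r x y) ↔ (y ≠ x ∧ ¬ r' y x ∧ ¬ r' x y)) (y : α) :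
    r x y ↔ r' x y := by
  by_cases hyx : y = x
  · subst hyx
    exact iff_of_false (hrIrrefl y) (hr'Irrefl y)
  by_cases hyPast : r y x
  · exact iff_of_false (fun h => hrIrrefl _ (hrTrans _ _ _ hyPast h))
      (fun h => hr'Irrefl _ (hr'Trans _ _ _ ((hPast y).1 hyPast) h))
  · have hyPast' : ¬ r' y x := mt (hPast y).2 hyPast
    simpa [hyx, hyPast, hyPast', not_iff_not] using hElse y

theorem inPE_of_not_future {Δ : Type*} {κ : PVar Δ → PVar Δ → Prop} {A : Δ} {Y : PVar Δ}
    (hY : Y ≠ IVv A) (hYFut : ¬ κ (IVv A) Y) : inPE κ A Y :=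
  or_iff_not_imp_left.2 fun hYPast => ⟨hY, hYPast, hYFut⟩

theorem ClosedLabStruct.rel_XOv_of_rel_IVv {Δ : Type*} {σ : PVar Δ → PVar Δ → Prop}
    (hσ : ClosedLabStruct σ) {A V : Δ} (h : σ (IVv A) (XIv V)) : σ (XOv A) (XIv V) := by
  rcases ((hσ A (XIv V)).1).1 h with h | h | h
  · simp [XIv, OVv] at h
  · simp [XIv, XOv] at h
  · exact h

def AgreeOffFuture {Δ : Type*} (A : Δ) (σ τ : PVar Δ → PVar Δ → Prop) : Prop :=
  (∀ Y, σ (IVv A) Y ↔ τ (IVv A) Y) ∧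
  ∀ Y Z, Y ≠ IVv A → Z ≠ IVv A → ¬ σ (IVv A) Y → ¬ σ (IVv A) Z → (σ Y Z ↔ τ Y Z)

namespace AgreeOffFuture

variable {Δ : Type*} {A : Δ} {σ τ : PVar Δ → PVar Δ → Prop}

theorem symm (h : AgreeOffFuture A σ τ) : AgreeOffFuture A τ σ :=
  ⟨fun Y => (h.1 Y).symm, fun Y Z hY hZ hYFut hZFut =>
    (h.2 Y Z hY hZ (mt (h.1 Y).1 hYFut) (mt (h.1 Z).1 hZFut)).symm⟩

theorem rel_or_of_rel (h : AgreeOffFuture A σ τ) (hσ : ClosedLabStruct σ)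
    (hτTrans : ∀ a b c, τ a b → τ b c → τ a c) {W V : Δ} (hWV : τ (XOv W) (XIv V)) :
    σ (XOv W) (XIv V) ∨ σ (XOv A) (XIv V) := by
  by_cases hVFut : σ (IVv A) (XIv V)
  · exact .inr (hσ.rel_XOv_of_rel_IVv hVFut)
  · have hWFut : ¬ σ (IVv A) (XOv W) := fun hW =>
      hVFut ((h.1 _).2 (hτTrans _ _ _ ((h.1 _).1 hW) hWV))
    exact .inl ((h.2 _ _ (by simp [XOv, IVv]) (by simp [XIv, IVv]) hWFut hVFut).2 hWV)

theorem coarse_or_of_coarse (h : AgreeOffFuture A σ τ) (hσ : ClosedLabStruct σ)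
    (hτTrans : ∀ a b c, τ a b → τ b c → τ a c) {a b : Δ} (hab : coarse τ a b) :
    coarse σ a b ∨ coarse σ A b :=
  hab.or_of_imp_or fun _ _ => h.rel_or_of_rel hσ hτTrans

theorem qcond (h : AgreeOffFuture A σ τ) (hσ : ClosedLabStruct σ) (hτ : ClosedLabStruct τ)
    (hσTrans : ∀ a b c, σ a b → σ b c → σ a c) (hτTrans : ∀ a b c, τ a b → τ b c → τ a c)
    {𝒳 : Set Δ} {ξ₀ : Δ → Δ → Prop} (hξ₀A : ¬ ξ₀ A A) (hQ : Qcond σ A 𝒳 ξ₀) :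
    Qcond τ A 𝒳 ξ₀ := by
  obtain ⟨hQ1, hQ2⟩ := hQ
  have hA : A ∈ insert A 𝒳 := Set.mem_insert A 𝒳
  have hσA : ∀ b ∈ insert A 𝒳, ¬ coarse σ A b := by
    rintro b (rfl | hb)
    · exact fun hbb => hξ₀A ((hQ2 b hA b hA).1 hbb)
    · exact hQ1 b hb
  have hτA : ∀ b ∈ insert A 𝒳, ¬ coarse τ A b := fun b hb hAb =>
    hσA b hb ((h.coarse_or_of_coarse hσ hτTrans hAb).elim id id)
  have hcoarse : ∀ a, ∀ b ∈ insert A 𝒳, coarse τ a b ↔ coarse σ a b := fun a b hb =>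
    ⟨fun hab => (h.coarse_or_of_coarse hσ hτTrans hab).resolve_right (hσA b hb),
      fun hab => (h.symm.coarse_or_of_coarse hτ hσTrans hab).resolve_right (hτA b hb)⟩
  exact ⟨fun W hW => hτA W (Set.mem_insert_of_mem A hW),
    fun a ha b hb => (hcoarse a b hb).trans (hQ2 a ha b hb)⟩

end AgreeOffFuture

theorem observation1_general
    {Δ : Type*}
    (A : Δ) (𝒳 : Set Δ)
    (ξ₀ : Δ → Δ → Prop)
    (hξ₀Irrefl : ∀ a ∈ insert A 𝒳, ¬ ξ₀ a a)
    (κ κ' : PVar Δ → PVar Δ → Prop)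
    (hκIrrefl : ∀ a, ¬ κ a a) (hκTrans : ∀ a b c, κ a b → κ b c → κ a c)
    (hκ'Irrefl : ∀ a, ¬ κ' a a) (hκ'Trans : ∀ a b c, κ' a b → κ' b c → κ' a c)
    (hκCL : ClosedLabStruct κ) (hκ'CL : ClosedLabStruct κ')
    (hPast : ∀ Y, κ Y (IVv A) ↔ κ' Y (IVv A))
    (hElse : ∀ Y, (Y ≠ IVv A ∧ ¬ κ Y (IVv A) ∧ ¬ κ (IVv A) Y) ↔
      (Y ≠ IVv A ∧ ¬ κ' Y (IVv A) ∧ ¬ κ' (IVv A) Y))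
    (hAgree : ∀ Y Z, inPE κ A Y → inPE κ A Z → (κ Y Z ↔ κ' Y Z)) :
    Qcond κ A 𝒳 ξ₀ ↔ Qcond κ' A 𝒳 ξ₀ := by
  have h : AgreeOffFuture A κ κ' :=
    ⟨future_iff_of_past_iff_of_elsewhere_iff hκIrrefl hκTrans hκ'Irrefl hκ'Trans hPast hElse,
      fun Y Z hY hZ hYFut hZFut =>
        hAgree Y Z (inPE_of_not_future hY hYFut) (inPE_of_not_future hZ hZFut)⟩
  have hξ₀A : ¬ ξ₀ A A := hξ₀Irrefl A (Set.mem_insert A 𝒳)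
  exact ⟨h.qcond hκCL hκ'CL hκTrans hκ'Trans hξ₀A, h.symm.qcond hκ'CL hκCL hκ'Trans hκTrans hξ₀A⟩

/-- Observation 1: fix a party `A`, a subset `𝒳 ⊆ Δ \ {A}`, and a strict
partial order `ξ₀` on `{A} ∪ 𝒳`. For two SPOs `κ, κ'` on `Γ` satisfying the
closed-laboratory structural conditions: if the causal past and the causal elsewhere of
`I_A` are the same sets for `κ` and `κ'`, and `κ` and `κ'` agree as relations on
`𝒫_{I_A} ∪ ℰ_{I_A}`, then `Q(κ)` holds iff `Q(κ')` holds. -/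
theorem observation1
    {Δ : Type*} [Fintype Δ]
    (A : Δ) (𝒳 : Set Δ) (hA𝒳 : A ∉ 𝒳)
    (ξ₀ : Δ → Δ → Prop)
    (hξ₀Irrefl : ∀ a ∈ insert A 𝒳, ¬ ξ₀ a a)
    (hξ₀Trans : ∀ a ∈ insert A 𝒳, ∀ b ∈ insert A 𝒳, ∀ c ∈ insert A 𝒳,
      ξ₀ a b → ξ₀ b c → ξ₀ a c)
    (κ κ' : PVar Δ → PVar Δ → Prop)
    (hκIrrefl : ∀ a, ¬ κ a a) (hκTrans : ∀ a b c, κ a b → κ b c → κ a c)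
    (hκ'Irrefl : ∀ a, ¬ κ' a a) (hκ'Trans : ∀ a b c, κ' a b → κ' b c → κ' a c)
    (hκCL : ClosedLabStruct κ) (hκ'CL : ClosedLabStruct κ')
    (hPast : ∀ Y, κ Y (IVv A) ↔ κ' Y (IVv A))
    (hElse : ∀ Y, (Y ≠ IVv A ∧ ¬ κ Y (IVv A) ∧ ¬ κ (IVv A) Y) ↔
      (Y ≠ IVv A ∧ ¬ κ' Y (IVv A) ∧ ¬ κ' (IVv A) Y))
    (hAgree : ∀ Y Z, inPE κ A Y → inPE κ A Z → (κ Y Z ↔ κ' Y Z)) :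
    Qcond κ A 𝒳 ξ₀ ↔ Qcond κ' A 𝒳 ξ₀ :=
  observation1_general A 𝒳 ξ₀ hξ₀Irrefl κ κ' hκIrrefl hκTrans hκ'Irrefl hκ'Trans hκCL hκ'CL hPast
    hElse hAgree
end

section
/- (Observation 2.) Let κ be a strict partial order on Γ satisfying the closed-laboratory structural conditions for every party. Then for any two distinct parties A, X ∈ Δ: if A_O ⊀ X_I (with respect to κ), then I_A ⊀ O_X; that is, O_X lies in the causal past or causal elsewhere of I_A. -/
/-- Observation 2: if a strict partial order `κ` on `Γ` satisfies the
closed-laboratory structural conditions for every party, then for any two distinct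
parties `A, X`: if `A_O ⊀ X_I`, then `I_A ⊀ O_X`, i.e. `O_X` lies in the causal past or
causal elsewhere of `I_A`. -/
theorem observation2
    {Δ : Type*} [Fintype Δ] (κ : PVar Δ → PVar Δ → Prop)
    (hIrrefl : ∀ a, ¬ κ a a)
    (hTrans : ∀ a b c, κ a b → κ b c → κ a c)
    (hCL : ClosedLabStruct κ)
    (A X : Δ) (hAX : A ≠ X)
    (h : ¬ κ (XOv A) (XIv X)) :
    ¬ κ (IVv A) (OVv X) := by
  intro hk
  have h2 := (hCL X (IVv A)).2.1 hk
  have hne : A ≠ X := hAX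
  have hk2 : κ (IVv A) (XIv X) := by
    rcases h2 with h2 | h2 | h2
    · simp [IVv, Prod.ext_iff] at h2; exact absurd h2 hne
    · simp [IVv, XIv, Prod.ext_iff] at h2
    · exact h2
  have h1 := (hCL A (XIv X)).1.1 hk2
  rcases h1 with h1 | h1 | h1
  · simp [XIv, OVv, Prod.ext_iff] at h1
  · simp [XIv, XOv, Prod.ext_iff] at h1
  · exact h h1
end
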